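/- Assume (F), (H), and (L): there exist r > 0 and a continuous function γ̃ : [0,∞) → [0,∞) with γ̃(0) = 0 and γ̃(s) > 0 for s > 0 such that ℓ(x) = γ̃(dist(x,𝔐)) whenever dist(x,𝔐) ≤ r. Write d(x) := dist(x,𝔐). Then: (i) for every x with d(x) ≤ r one has v(x) = ∫₀^{d(x)} γ̃(s) ds, and every optimal control α* for such x has hitting time t_x(α*) = d(x); (ii) for every x ∈ ℝⁿ and every optimal control α* for x, the hitting time t_x(α*) is finite. -/

import Mathlib

/-! Along any admissible trajectory `d(y(t))` decreases at most at unit speed, and near the target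
`ℓ = γ̃ ∘ d`. Hence the push-forward by `t ↦ d(y(t))` of Lebesgue measure on the tail of a
trajectory after `t₀` dominates Lebesgue measure on `(0, d(y(t₀)))`, so the remaining cost is at
least `∫₀^{d(y(t₀))} γ̃`. Equality holds when the trajectory runs straight to a closest point of the
target; if it arrives any later, the excess of the push-forward has positive mass where the cost is
positive, and the inequality is strict. This gives (i). For (ii), an optimal control has finite
cost, so by (H) its trajectory comes within distance `r` of the target; rerouting it straight from
there would be strictly cheaper unless it already hits the target in time `d`. -/

open MeasureTheory Filter Metric Set Topology
open scoped ENNReal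

noncomputable section

/-- `n`-dimensional Euclidean space. -/
abbrev Euc (n : ℕ) := EuclideanSpace ℝ (Fin n)

variable {n : ℕ}

/-- Trajectory of the control system `ẏ = α`, `y 0 = x`. -/
def traj (x : Euc n) (α : ℝ → Euc n) (t : ℝ) : Euc n :=
  x + ∫ s in Set.Ioc (0 : ℝ) t, α s

/-- An admissible control: measurable with `‖α s‖ ≤ 1` for a.e. `s ≥ 0`. -/
def Admissible (α : ℝ → Euc n) : Prop :=
  Measurable α ∧ ∀ᵐ s ∂(volume : Measure ℝ), 0 ≤ s → ‖α s‖ ≤ 1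

/-- Hitting time `t_x(α) = inf {s ≥ 0 : y_x^α(s) ∈ M}` (`∞` if the set is empty). -/
def hitTime (M : Set (Euc n)) (x : Euc n) (α : ℝ → Euc n) : ℝ≥0∞ :=
  ⨅ (s : ℝ) (_ : 0 ≤ s) (_ : traj x α s ∈ M), ENNReal.ofReal s

/-- Cost `∫₀^{t_x(α)} ℓ(y_x^α(s)) ds` of a control (as an extended real, `ℓ ≥ 0`). -/
def cost (M : Set (Euc n)) (l : Euc n → ℝ) (x : Euc n) (α : ℝ → Euc n) : ℝ≥0∞ :=
  ∫⁻ s in {s : ℝ | 0 < s ∧ ENNReal.ofReal s < hitTime M x α},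
    ENNReal.ofReal (l (traj x α s))

/-- The value function (extended-real valued). -/
def valE (M : Set (Euc n)) (l : Euc n → ℝ) (x : Euc n) : ℝ≥0∞ :=
  ⨅ (α : ℝ → Euc n) (_ : Admissible α), cost M l x α

/-- The value function `v`. -/
def val (M : Set (Euc n)) (l : Euc n → ℝ) (x : Euc n) : ℝ := (valE M l x).toReal

/-- A control is optimal for `x` if it is admissible and attains the infimum. -/
def IsOptimal (M : Set (Euc n)) (l : Euc n → ℝ) (x : Euc n) (α : ℝ → Euc n) : Prop :=
  Admissible α ∧ cost M l x α = valE M l x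

/-- The viscosity subdifferential `D⁻v(z)`. -/
def subDiff (v : Euc n → ℝ) (z : Euc n) : Set (Euc n) :=
  {p | ∀ ε > 0, ∀ᶠ x in 𝓝 z, v z + (inner ℝ p (x - z) : ℝ) - ε * ‖x - z‖ ≤ v x}

/-- The viscosity superdifferential `D⁺v(z)`. -/
def superDiff (v : Euc n → ℝ) (z : Euc n) : Set (Euc n) :=
  {p | ∀ ε > 0, ∀ᶠ x in 𝓝 z, v x ≤ v z + (inner ℝ p (x - z) : ℝ) + ε * ‖x - z‖}

/-- The set of limiting gradients `D*v(z)`. -/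
def limGrad (v : Euc n → ℝ) (z : Euc n) : Set (Euc n) :=
  {p | ∃ u : ℕ → Euc n, (∀ k, DifferentiableAt ℝ v (u k)) ∧
    Tendsto u atTop (𝓝 z) ∧ Tendsto (fun k => gradient v (u k)) atTop (𝓝 p)}

/-- Distance of the trajectory to the target, with the trajectory extended so that it
remains in `M` after the hitting time. -/
def extDist (M : Set (Euc n)) (x : Euc n) (α : ℝ → Euc n) (t : ℝ) : ℝ :=
  if ENNReal.ofReal t < hitTime M x α then Metric.infDist (traj x α t) M else 0

end

lemma volume_restrict_le_map_restrict {f : ℝ → ℝ} (hf : LipschitzWith 1 f) {A B : Set ℝ}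
    (hB : B ⊆ f '' A) : volume.restrict B ≤ (volume.restrict A).map f := by
  refine Measure.le_iff.2 fun E hE => ?_
  have hfE : MeasurableSet (f ⁻¹' E) := hf.continuous.measurable hE
  rw [Measure.restrict_apply hE, Measure.map_apply hf.continuous.measurable hE,
    Measure.restrict_apply hfE]
  calc volume (E ∩ B) ≤ volume (f '' (f ⁻¹' E ∩ A)) := by
        refine measure_mono fun s ⟨hsE, hsB⟩ => ?_
        obtain ⟨t, ht, rfl⟩ := hB hsB
        exact ⟨t, ⟨hsE, ht⟩, rfl⟩
    _ ≤ volume (f ⁻¹' E ∩ A) := by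
        simpa [hausdorffMeasure_real] using hf.hausdorffMeasure_image_le zero_le_one (f ⁻¹' E ∩ A)

/-- The push-forward of `volume` on `A` under `f` dominates `volume` on `B`; the excess has
mass `volume A - volume B > 0` and lives where `g ≠ 0`. -/
lemma setLIntegral_lt_setLIntegral_comp {f : ℝ → ℝ} (hf : LipschitzWith 1 f) {A B : Set ℝ}
    (hB : B ⊆ f '' A) (hvol : volume B < volume A) {g : ℝ → ℝ≥0∞} (hg : Measurable g)
    (hg0 : ∀ t ∈ A, g (f t) ≠ 0) (hfin : ∫⁻ s in B, g s ≠ ⊤) :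
    ∫⁻ s in B, g s < ∫⁻ t in A, g (f t) := by
  have hfm : Measurable f := hf.continuous.measurable
  have hsupp : MeasurableSet (Function.support g) := hg (measurableSet_singleton 0).compl
  have hle := volume_restrict_le_map_restrict hf hB
  have : IsFiniteMeasure (volume.restrict B) :=
    isFiniteMeasure_restrict.2 (hvol.trans_le le_top).ne
  have hnull : (volume.restrict A).map f (Function.support g)ᶜ = 0 := by
    rw [Measure.map_apply hfm hsupp.compl, Measure.restrict_apply (hfm hsupp.compl)]
    exact measure_mono_null (fun t ⟨ht, htA⟩ => absurd (Function.notMem_support.1 ht) (hg0 t htA))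
      measure_empty
  have hexcess : 0 < ((volume.restrict A).map f - volume.restrict B) (Function.support g) := by
    rw [measure_of_measure_compl_eq_zero
        (le_zero_iff.1 ((Measure.le_iff'.1 Measure.sub_le _).trans hnull.le)),
      Measure.sub_apply MeasurableSet.univ hle, Measure.map_apply hfm MeasurableSet.univ,
      Measure.restrict_apply_univ, Set.preimage_univ, Measure.restrict_apply_univ]
    exact tsub_pos_of_lt hvol
  calc ∫⁻ s in B, g s
      < (∫⁻ s in B, g s) + ∫⁻ s, g s ∂((volume.restrict A).map f - volume.restrict B) :=
        ENNReal.lt_add_right hfin ((lintegral_pos_iff_support hg).2 hexcess).ne'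
    _ = ∫⁻ s, g s ∂((volume.restrict A).map f) := by
        rw [add_comm, ← lintegral_add_measure, Measure.sub_add_cancel_of_le hle]
    _ = ∫⁻ t in A, g (f t) := lintegral_map hg hfm

lemma lintegral_Ioo_comp_const_sub (f : ℝ → ℝ≥0∞) (hf : Measurable f) (a b : ℝ) :
    ∫⁻ t in Ioo a (a + b), f (a + b - t) = ∫⁻ s in Ioo 0 b, f s := by
  have hpre : (fun t => a + b - t) ⁻¹' Ioo 0 b = Ioo a (a + b) := by
    ext t
    simp only [mem_preimage, mem_Ioo]
    constructor <;> rintro ⟨h1, h2⟩ <;> constructor <;> linarith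
  rw [← hpre, (Measure.measurePreserving_sub_left volume (a + b)).setLIntegral_comp_preimage
    measurableSet_Ioo hf]

lemma ofReal_intervalIntegral_eq_setLIntegral {g : ℝ → ℝ} (hg : Continuous g) {a b : ℝ}
    (hab : a ≤ b) (hg0 : ∀ s ∈ Ioo a b, 0 ≤ g s) :
    ENNReal.ofReal (∫ s in a..b, g s) = ∫⁻ s in Ioo a b, ENNReal.ofReal (g s) := by
  rw [intervalIntegral.integral_of_le hab, integral_Ioc_eq_integral_Ioo,
    ofReal_integral_eq_lintegral_ofReal (hg.integrableOn_Icc.mono_set Ioo_subset_Icc_self)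
      ((ae_restrict_iff' measurableSet_Ioo).2 (Eventually.of_forall hg0))]

section Trajectory

variable {n : ℕ} {M : Set (Euc n)} {x : Euc n} {α : ℝ → Euc n}

lemma Admissible.integrableOn_Ioc (hα : Admissible α) {a b : ℝ} (ha : 0 ≤ a) :
    IntegrableOn α (Ioc a b) := by
  refine ⟨hα.1.aestronglyMeasurable, HasFiniteIntegral.of_bounded (C := 1) ?_⟩
  filter_upwards [ae_restrict_of_ae hα.2, ae_restrict_mem measurableSet_Ioc] with s hs hmem
  exact hs (ha.trans hmem.1.le)

lemma traj_of_nonpos {t : ℝ} (ht : t ≤ 0) : traj x α t = x := by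
  rw [traj, Ioc_eq_empty (not_lt.2 ht), setIntegral_empty, add_zero]

@[simp]
lemma traj_zero : traj x α 0 = x := traj_of_nonpos le_rfl

lemma traj_eq_add_setIntegral (hα : Admissible α) {s t : ℝ} (hs : 0 ≤ s) (hst : s ≤ t) :
    traj x α t = traj x α s + ∫ u in Ioc s t, α u := by
  rw [traj, traj, ← Ioc_union_Ioc_eq_Ioc hs hst, setIntegral_union (Ioc_disjoint_Ioc_of_le le_rfl)
    measurableSet_Ioc (hα.integrableOn_Ioc le_rfl) (hα.integrableOn_Ioc hs), add_assoc]

lemma dist_traj_le (hα : Admissible α) {s t : ℝ} (hs : 0 ≤ s) (hst : s ≤ t) :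
    dist (traj x α t) (traj x α s) ≤ t - s := by
  rw [dist_eq_norm, traj_eq_add_setIntegral hα hs hst, add_sub_cancel_left]
  calc ‖∫ u in Ioc s t, α u‖ ≤ 1 * volume.real (Ioc s t) := by
        refine norm_setIntegral_le_of_norm_le_const_ae' (by simp) ?_
        filter_upwards [hα.2] with u hu hmem
        exact hu (hs.trans hmem.1.le)
    _ = t - s := by rw [one_mul, Real.volume_real_Ioc_of_le hst]

lemma lipschitzWith_traj (hα : Admissible α) : LipschitzWith 1 (traj x α) := by
  have hmax : ∀ t, traj x α t = traj x α (max t 0) := fun t => by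
    rcases le_total t 0 with ht | ht
    · rw [traj_of_nonpos ht, traj_of_nonpos (max_le ht le_rfl)]
    · rw [max_eq_left ht]
  have hIci : ∀ s t, 0 ≤ s → 0 ≤ t → dist (traj x α t) (traj x α s) ≤ |t - s| := by
    intro s t hs ht
    rcases le_total s t with hst | hst
    · exact (dist_traj_le hα hs hst).trans (le_abs_self _)
    · rw [dist_comm, abs_sub_comm]
      exact (dist_traj_le hα ht hst).trans (le_abs_self _)
  refine LipschitzWith.of_dist_le_mul fun t s => ?_
  rw [hmax t, hmax s, NNReal.coe_one, one_mul, Real.dist_eq]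
  exact (hIci _ _ (le_max_right _ _) (le_max_right _ _)).trans (abs_max_sub_max_le_abs _ _ _)

lemma lipschitzWith_infDist_traj (hα : Admissible α) :
    LipschitzWith 1 fun t => infDist (traj x α t) M := by
  simpa [Function.comp_def] using (lipschitz_infDist_pt M).comp (lipschitzWith_traj hα)

lemma abs_infDist_traj_sub_le (hα : Admissible α) (s t : ℝ) :
    |infDist (traj x α t) M - infDist (traj x α s) M| ≤ |t - s| := by
  simpa [Real.dist_eq] using (lipschitzWith_infDist_traj (M := M) hα).dist_le_mul t s

end Trajectory

section HitTime

variable {n : ℕ} {M : Set (Euc n)} {x : Euc n} {α : ℝ → Euc n}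

lemma hitTime_le {s : ℝ} (hs : 0 ≤ s) (hm : traj x α s ∈ M) :
    hitTime M x α ≤ ENNReal.ofReal s :=
  iInf₂_le_of_le s hs (iInf_le _ hm)

lemma le_hitTime {c : ℝ} (hc : ∀ s, 0 ≤ s → traj x α s ∈ M → c ≤ s) :
    ENNReal.ofReal c ≤ hitTime M x α :=
  le_iInf₂ fun s hs => le_iInf fun hm => ENNReal.ofReal_le_ofReal (hc s hs hm)

lemma traj_notMem_of_lt_hitTime {t : ℝ} (ht : 0 ≤ t) (h : ENNReal.ofReal t < hitTime M x α) :
    traj x α t ∉ M :=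
  fun hm => (hitTime_le ht hm).not_gt h

lemma hitTime_eq_zero_of_mem (hx : x ∈ M) : hitTime M x α = 0 :=
  le_zero_iff.1 (by simpa using hitTime_le (α := α) le_rfl (by simpa using hx))

lemma traj_toReal_hitTime_mem (hMcl : IsClosed M) (hα : Admissible α)
    (hT : hitTime M x α ≠ ⊤) : traj x α (hitTime M x α).toReal ∈ M := by
  set K : Set ℝ := Ici 0 ∩ traj x α ⁻¹' M
  have hKne : K.Nonempty := by
    by_contra hK
    refine hT (le_antisymm le_top (le_iInf₂ fun s hs => le_iInf fun hm => ?_))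
    exact absurd ⟨s, hs, hm⟩ hK
  have hKcl : IsClosed K := isClosed_Ici.inter (hMcl.preimage (lipschitzWith_traj hα).continuous)
  have hKbdd : BddBelow K := ⟨0, fun _ hs => hs.1⟩
  have hmem : sInf K ∈ K := hKcl.csInf_mem hKne hKbdd
  have hT_eq : hitTime M x α = ENNReal.ofReal (sInf K) :=
    le_antisymm (hitTime_le hmem.1 hmem.2) (le_hitTime fun s hs hm => csInf_le hKbdd ⟨hs, hm⟩)
  rw [hT_eq, ENNReal.toReal_ofReal hmem.1]
  exact hmem.2

lemma hitTime_pos (hMcl : IsClosed M) (hα : Admissible α) (hx : x ∉ M) :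
    0 < hitTime M x α := by
  refine pos_iff_ne_zero.2 fun h0 => hx ?_
  have h := traj_toReal_hitTime_mem hMcl hα (h0 ▸ ENNReal.zero_ne_top)
  rwa [h0, ENNReal.toReal_zero, traj_zero] at h

lemma admissible_zero : Admissible (0 : ℝ → Euc n) :=
  ⟨measurable_const, Eventually.of_forall fun _ _ => by simp⟩

lemma infDist_traj_pos_of_lt_hitTime (hMne : M.Nonempty) (hMcl : IsClosed M) {t : ℝ}
    (ht : 0 ≤ t) (h : ENNReal.ofReal t < hitTime M x α) : 0 < infDist (traj x α t) M :=
  (hMcl.notMem_iff_infDist_pos hMne).1 (traj_notMem_of_lt_hitTime ht h)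

lemma add_infDist_le_of_mem (hα : Admissible α) {t₀ s : ℝ} (hs : t₀ ≤ s)
    (hm : traj x α s ∈ M) : t₀ + infDist (traj x α t₀) M ≤ s := by
  have := abs_infDist_traj_sub_le (M := M) (x := x) hα t₀ s
  rw [infDist_zero_of_mem hm, abs_of_nonneg (sub_nonneg.2 hs)] at this
  linarith [neg_le_abs (0 - infDist (traj x α t₀) M)]

lemma ofReal_add_infDist_le_hitTime (hα : Admissible α) {t₀ : ℝ}
    (ht₀ : ENNReal.ofReal t₀ < hitTime M x α) :
    ENNReal.ofReal (t₀ + infDist (traj x α t₀) M) ≤ hitTime M x α := by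
  refine le_hitTime fun s hs hm => add_infDist_le_of_mem hα ?_ hm
  by_contra! h
  exact (hitTime_le hs hm).not_gt (ht₀.trans_le' (ENNReal.ofReal_le_ofReal h.le))

end HitTime

section Reroute

variable {n : ℕ} {M : Set (Euc n)} {x : Euc n} {α : ℝ → Euc n} {t₀ : ℝ} {u : Euc n}

noncomputable def concatConst (α : ℝ → Euc n) (t₀ : ℝ) (u : Euc n) : ℝ → Euc n :=
  fun s => if s ≤ t₀ then α s else u

lemma admissible_concatConst (hα : Admissible α) (hu : ‖u‖ ≤ 1) :
    Admissible (concatConst α t₀ u) := by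
  refine ⟨Measurable.ite measurableSet_Iic hα.1 measurable_const, ?_⟩
  filter_upwards [hα.2] with s hs hs0
  by_cases h : s ≤ t₀
  · simpa [concatConst, h] using hs hs0
  · simpa [concatConst, h] using hu

lemma traj_concatConst_of_le {t : ℝ} (ht : t ≤ t₀) :
    traj x (concatConst α t₀ u) t = traj x α t := by
  rw [traj, traj, setIntegral_congr_fun measurableSet_Ioc fun s hs =>
    show concatConst α t₀ u s = α s from if_pos (hs.2.trans ht)]

lemma traj_concatConst_of_ge (hα : Admissible α) (hu : ‖u‖ ≤ 1) (h0 : 0 ≤ t₀) {t : ℝ}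
    (ht : t₀ ≤ t) : traj x (concatConst α t₀ u) t = traj x α t₀ + (t - t₀) • u := by
  rw [traj_eq_add_setIntegral (admissible_concatConst hα hu) h0 ht, traj_concatConst_of_le le_rfl,
    setIntegral_congr_fun measurableSet_Ioc fun s hs =>
      show concatConst α t₀ u s = u from if_neg (not_le.2 hs.1),
    setIntegral_const, Real.volume_real_Ioc_of_le ht]

/-- Follow `α` up to time `t₀`, then head straight for a closest point of the target. -/
lemma exists_reroute (hMne : M.Nonempty) (hMcl : IsClosed M) (hα : Admissible α) (h0 : 0 ≤ t₀)
    (ht₀ : ENNReal.ofReal t₀ < hitTime M x α) :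
    ∃ β, Admissible β ∧ (∀ t ≤ t₀, traj x β t = traj x α t) ∧
      hitTime M x β = ENNReal.ofReal (t₀ + infDist (traj x α t₀) M) := by
  set z := traj x α t₀
  obtain ⟨p, hpM, hp⟩ := hMcl.exists_infDist_eq_dist hMne z
  have hb : 0 < dist z p := hp ▸ infDist_traj_pos_of_lt_hitTime hMne hMcl h0 ht₀
  have hu : ‖(dist z p)⁻¹ • (p - z)‖ = 1 := by
    rw [norm_smul, norm_inv, Real.norm_of_nonneg dist_nonneg, ← dist_eq_norm',
      inv_mul_cancel₀ hb.ne']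
  set β := concatConst α t₀ ((dist z p)⁻¹ • (p - z))
  have hβ : Admissible β := admissible_concatConst hα hu.le
  have hleft : ∀ t ≤ t₀, traj x β t = traj x α t := fun t ht => traj_concatConst_of_le ht
  refine ⟨β, hβ, hleft, le_antisymm ?_ (le_hitTime fun s hs hm => ?_)⟩
  · refine hitTime_le (add_nonneg h0 infDist_nonneg) ?_
    rwa [traj_concatConst_of_ge hα hu.le h0 (le_add_of_nonneg_right infDist_nonneg),
      add_sub_cancel_left, hp, smul_smul, mul_inv_cancel₀ hb.ne', one_smul, add_sub_cancel]
  · rcases le_or_gt s t₀ with hst | hst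
    · exact absurd (hleft s hst ▸ hm)
        (traj_notMem_of_lt_hitTime hs ((ENNReal.ofReal_le_ofReal hst).trans_lt ht₀))
    · simpa [hleft t₀ le_rfl] using add_infDist_le_of_mem hβ hst.le hm

end Reroute

section TailCost

variable {n : ℕ} {M : Set (Euc n)} {l : Euc n → ℝ} {x : Euc n} {α : ℝ → Euc n} {t₀ : ℝ}

def tailTimes (M : Set (Euc n)) (x : Euc n) (α : ℝ → Euc n) (t₀ : ℝ) : Set ℝ :=
  {t | t₀ < t ∧ ENNReal.ofReal t < hitTime M x α}

noncomputable def tailCost (M : Set (Euc n)) (l : Euc n → ℝ) (x : Euc n) (α : ℝ → Euc n)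
    (t₀ : ℝ) : ℝ≥0∞ :=
  ∫⁻ t in tailTimes M x α t₀, ENNReal.ofReal (l (traj x α t))

lemma cost_eq_tailCost : cost M l x α = tailCost M l x α 0 := rfl

lemma measurableSet_tailTimes : MeasurableSet (tailTimes M x α t₀) :=
  measurableSet_Ioi.inter (ENNReal.measurable_ofReal measurableSet_Iio)

lemma tailCost_eq_add {t₁ : ℝ} (h : t₀ ≤ t₁) (ht₁ : ENNReal.ofReal t₁ < hitTime M x α) :
    tailCost M l x α t₀ =
      (∫⁻ t in Ioc t₀ t₁, ENNReal.ofReal (l (traj x α t))) + tailCost M l x α t₁ := by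
  have hsplit : tailTimes M x α t₀ = Ioc t₀ t₁ ∪ tailTimes M x α t₁ := by
    ext t
    simp only [tailTimes, mem_ofPred_eq, mem_union, mem_Ioc]
    constructor
    · rintro ⟨h₀, hT⟩
      exact (le_or_gt t t₁).imp (fun h₁ => ⟨h₀, h₁⟩) fun h₁ => ⟨h₁, hT⟩
    · rintro (⟨h₀, h₁⟩ | ⟨h₁, hT⟩)
      · exact ⟨h₀, (ENNReal.ofReal_le_ofReal h₁).trans_lt ht₁⟩
      · exact ⟨h.trans_lt h₁, hT⟩
  rw [tailCost, hsplit, lintegral_union measurableSet_tailTimes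
    (disjoint_left.2 fun t ht ht' => ht.2.not_gt ht'.1)]
  rfl

lemma tailCost_lt_top (hlc : Continuous l) (hα : Admissible α) (hT : hitTime M x α ≠ ⊤) :
    tailCost M l x α t₀ < ⊤ := by
  have hsub : tailTimes M x α t₀ ⊆ Icc t₀ (hitTime M x α).toReal := fun t ht =>
    ⟨ht.1.le, (le_max_left t 0).trans
      (ENNReal.toReal_ofReal' (r := t) ▸ ENNReal.toReal_mono hT ht.2.le)⟩
  exact (lintegral_mono_set hsub).trans_lt
    ((hlc.comp (lipschitzWith_traj hα).continuous).integrableOn_Icc.lintegral_lt_top)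

end TailCost

section Comparison

variable {n : ℕ} {M : Set (Euc n)} {l : Euc n → ℝ} {x : Euc n} {α : ℝ → Euc n}
  {γ γt : ℝ → ℝ} {r t₀ : ℝ}

-- Hitting the target as early as possible forces `d(y(t)) = t₀ + d(y(t₀)) - t` on the tail.
lemma tailCost_eq_of_hitTime_eq (hMcl : IsClosed M) (hγtc : Continuous γt)
    (hγtpos : ∀ s : ℝ, 0 < s → 0 < γt s)
    (hL : ∀ z : Euc n, infDist z M ≤ r → l z = γt (infDist z M))
    (hα : Admissible α) (h0 : 0 ≤ t₀) (hr : infDist (traj x α t₀) M ≤ r)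
    (hT : hitTime M x α = ENNReal.ofReal (t₀ + infDist (traj x α t₀) M)) :
    tailCost M l x α t₀ = ENNReal.ofReal (∫ s in (0 : ℝ)..infDist (traj x α t₀) M, γt s) := by
  set b := infDist (traj x α t₀) M
  have hb : 0 ≤ b := infDist_nonneg
  have hS : tailTimes M x α t₀ = Ioo t₀ (t₀ + b) := by
    ext t
    simp only [tailTimes, mem_ofPred_eq, mem_Ioo, hT]
    exact and_congr_right fun ht => ENNReal.ofReal_lt_ofReal_iff_of_nonneg (h0.trans ht.le)
  have hend : traj x α (t₀ + b) ∈ M := by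
    simpa [hT, ENNReal.toReal_ofReal (add_nonneg h0 hb)] using
      traj_toReal_hitTime_mem (x := x) hMcl hα (hT ▸ ENNReal.ofReal_ne_top)
  have hD : ∀ t ∈ Ioo t₀ (t₀ + b), infDist (traj x α t) M = t₀ + b - t := by
    intro t ht
    have h₁ := abs_infDist_traj_sub_le (M := M) (x := x) hα t₀ t
    have h₂ := abs_infDist_traj_sub_le (M := M) (x := x) hα t (t₀ + b)
    rw [abs_of_pos (sub_pos.2 ht.1)] at h₁
    rw [infDist_zero_of_mem hend, abs_of_pos (sub_pos.2 ht.2)] at h₂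
    linarith [abs_le.1 h₁, abs_le.1 h₂]
  rw [tailCost, hS, setLIntegral_congr_fun measurableSet_Ioo fun t ht => by
      rw [hL _ (by linarith [hD t ht, ht.1]), hD t ht],
    lintegral_Ioo_comp_const_sub (fun s => ENNReal.ofReal (γt s))
      (ENNReal.measurable_ofReal.comp hγtc.measurable),
    ofReal_intervalIntegral_eq_setLIntegral hγtc hb fun s hs => (hγtpos s hs.1).le]

lemma exists_pos_le_of_le_infDist (hl0 : ∀ z, 0 ≤ l z)
    (hH : ∀ δ : ℝ, 0 < δ → 0 < γ δ ∧ γ δ < sInf (l '' {y : Euc n | δ < infDist y M}))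
    {δ : ℝ} (hδ : 0 < δ) : ∃ c > 0, ∀ z, δ ≤ infDist z M → c ≤ l z := by
  obtain ⟨hγ, hγl⟩ := hH (δ / 2) (half_pos hδ)
  have hbdd : BddBelow (l '' {y : Euc n | δ / 2 < infDist y M}) :=
    ⟨0, by rintro _ ⟨y, -, rfl⟩; exact hl0 y⟩
  exact ⟨γ (δ / 2), hγ, fun z hz =>
    hγl.le.trans (csInf_le hbdd ⟨z, show δ / 2 < infDist z M by linarith, rfl⟩)⟩

/-- Along a trajectory of finite tail cost the distance to the target becomes arbitrarily
small: by continuity at a finite hitting time, by (H) if the target is never hit. -/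
lemma exists_mem_tailTimes_infDist_lt (hMcl : IsClosed M) (hl0 : ∀ z, 0 ≤ l z)
    (hH : ∀ δ : ℝ, 0 < δ → 0 < γ δ ∧ γ δ < sInf (l '' {y : Euc n | δ < infDist y M}))
    (hα : Admissible α) (h0 : 0 ≤ t₀) (ht₀ : ENNReal.ofReal t₀ < hitTime M x α)
    (hfin : tailCost M l x α t₀ ≠ ⊤) {s : ℝ} (hs : 0 < s) :
    ∃ t ∈ tailTimes M x α t₀, infDist (traj x α t) M < s := by
  by_cases hT : hitTime M x α = ⊤
  · by_contra! hfar
    obtain ⟨c, hc, hcl⟩ := exists_pos_le_of_le_infDist hl0 hH hs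
    have hvol : volume (tailTimes M x α t₀) = ⊤ :=
      top_unique (Real.volume_Ioi ▸ measure_mono fun t ht => ⟨ht, by simp [hT]⟩)
    refine hfin (top_unique ?_)
    calc ⊤ = ∫⁻ _ in tailTimes M x α t₀, ENNReal.ofReal c := by
          rw [setLIntegral_const, hvol, ENNReal.mul_top (ENNReal.ofReal_pos.2 hc).ne']
      _ ≤ tailCost M l x α t₀ := setLIntegral_mono' measurableSet_tailTimes fun t ht =>
          ENNReal.ofReal_le_ofReal (hcl _ (hfar t ht))
  · have hlt : t₀ < (hitTime M x α).toReal := (ENNReal.ofReal_lt_iff_lt_toReal h0 hT).1 ht₀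
    have hnear : Tendsto (fun t => infDist (traj x α t) M) (𝓝[<] (hitTime M x α).toReal) (𝓝 0) := by
      rw [← infDist_zero_of_mem (traj_toReal_hitTime_mem hMcl hα hT)]
      exact ((lipschitzWith_infDist_traj hα).continuous.tendsto _).mono_left nhdsWithin_le_nhds
    obtain ⟨t, ⟨ht₀t, htT⟩, hts⟩ :=
      (Filter.Eventually.and (Ioo_mem_nhdsLT hlt) (hnear.eventually (gt_mem_nhds hs))).exists
    exact ⟨t, ⟨ht₀t, (ENNReal.ofReal_lt_iff_lt_toReal (h0.trans ht₀t.le) hT).2 htT⟩, hts⟩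

lemma Ioo_subset_image_tailTimes (hMcl : IsClosed M) (hl0 : ∀ z, 0 ≤ l z)
    (hH : ∀ δ : ℝ, 0 < δ → 0 < γ δ ∧ γ δ < sInf (l '' {y : Euc n | δ < infDist y M}))
    (hα : Admissible α) (h0 : 0 ≤ t₀) (ht₀ : ENNReal.ofReal t₀ < hitTime M x α)
    (hfin : tailCost M l x α t₀ ≠ ⊤) :
    Ioo 0 (infDist (traj x α t₀) M) ⊆
      (fun t => infDist (traj x α t) M) '' tailTimes M x α t₀ := by
  rintro s ⟨hs, hsb⟩
  obtain ⟨t₁, ht₁, ht₁s⟩ := exists_mem_tailTimes_infDist_lt hMcl hl0 hH hα h0 ht₀ hfin hs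
  obtain ⟨t, ht, hts⟩ := intermediate_value_Icc' ht₁.1.le
    (lipschitzWith_infDist_traj hα).continuous.continuousOn ⟨ht₁s.le, hsb.le⟩
  have htt₀ : t ≠ t₀ := by
    rintro rfl
    exact hsb.ne hts.symm
  exact ⟨t, ⟨ht.1.lt_of_ne htt₀.symm, (ENNReal.ofReal_le_ofReal ht.2).trans_lt ht₁.2⟩, hts⟩

lemma ofReal_infDist_lt_volume_tailTimes (hα : Admissible α)
    (ht₀ : ENNReal.ofReal t₀ < hitTime M x α)
    (hT : hitTime M x α ≠ ENNReal.ofReal (t₀ + infDist (traj x α t₀) M)) :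
    ENNReal.ofReal (infDist (traj x α t₀) M) < volume (tailTimes M x α t₀) := by
  obtain ⟨t₁, -, h₁, h₂⟩ := ENNReal.lt_iff_exists_real_btwn.1
    ((ofReal_add_infDist_le_hitTime hα ht₀).lt_of_ne' hT)
  have hb : 0 ≤ infDist (traj x α t₀) M := infDist_nonneg
  have ht₁ := (ENNReal.ofReal_lt_ofReal_iff'.1 h₁).1
  calc ENNReal.ofReal (infDist (traj x α t₀) M) < ENNReal.ofReal (t₁ - t₀) :=
        ENNReal.ofReal_lt_ofReal_iff'.2 ⟨by linarith, by linarith⟩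
    _ = volume (Ioo t₀ t₁) := Real.volume_Ioo.symm
    _ ≤ volume (tailTimes M x α t₀) :=
        measure_mono fun t ht => ⟨ht.1, (ENNReal.ofReal_le_ofReal ht.2.le).trans_lt h₂⟩

/-- Along the tail, `ℓ` dominates `g ∘ dist(·, M)`, where `g = γ̃` below `b = dist(y(t₀), M)`
and `g = c > 0` above; the tail spends more time than `b` in the region where `g > 0`. -/
lemma lt_tailCost_of_hitTime_ne (hMne : M.Nonempty) (hMcl : IsClosed M) (hl0 : ∀ z, 0 ≤ l z)
    (hH : ∀ δ : ℝ, 0 < δ → 0 < γ δ ∧ γ δ < sInf (l '' {y : Euc n | δ < infDist y M}))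
    (hγtc : Continuous γt) (hγtpos : ∀ s : ℝ, 0 < s → 0 < γt s)
    (hL : ∀ z : Euc n, infDist z M ≤ r → l z = γt (infDist z M))
    (hα : Admissible α) (h0 : 0 ≤ t₀) (ht₀ : ENNReal.ofReal t₀ < hitTime M x α)
    (hr : infDist (traj x α t₀) M ≤ r)
    (hT : hitTime M x α ≠ ENNReal.ofReal (t₀ + infDist (traj x α t₀) M)) :
    ENNReal.ofReal (∫ s in (0 : ℝ)..infDist (traj x α t₀) M, γt s) < tailCost M l x α t₀ := by
  set b := infDist (traj x α t₀) M
  have hb : 0 < b := infDist_traj_pos_of_lt_hitTime hMne hMcl h0 ht₀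
  rcases eq_or_ne (tailCost M l x α t₀) ⊤ with hfin | hfin
  · exact hfin ▸ ENNReal.ofReal_lt_top
  obtain ⟨c, hc, hcl⟩ := exists_pos_le_of_le_infDist hl0 hH hb
  set g : ℝ → ℝ := fun s => if s < b then γt s else c
  have hg_le : ∀ t ∈ tailTimes M x α t₀, g (infDist (traj x α t) M) ≤ l (traj x α t) := by
    intro t _
    by_cases h : infDist (traj x α t) M < b
    · simp only [g, if_pos h, hL _ (h.le.trans hr), le_rfl]
    · simpa only [g, if_neg h] using hcl _ (not_lt.1 h)
  have hg_pos : ∀ t ∈ tailTimes M x α t₀, ENNReal.ofReal (g (infDist (traj x α t) M)) ≠ 0 := by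
    intro t ht
    refine (ENNReal.ofReal_pos.2 ?_).ne'
    have := infDist_traj_pos_of_lt_hitTime hMne hMcl (h0.trans ht.1.le) ht.2
    by_cases h : infDist (traj x α t) M < b
    · simpa only [g, if_pos h] using hγtpos _ this
    · simpa only [g, if_neg h] using hc
  have hG : ENNReal.ofReal (∫ s in (0 : ℝ)..b, γt s) = ∫⁻ s in Ioo 0 b, ENNReal.ofReal (g s) := by
    rw [ofReal_intervalIntegral_eq_setLIntegral hγtc hb.le fun s hs => (hγtpos s hs.1).le]
    exact setLIntegral_congr_fun measurableSet_Ioo fun s hs => by simp only [g, if_pos hs.2]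
  rw [hG]
  calc ∫⁻ s in Ioo 0 b, ENNReal.ofReal (g s)
      < ∫⁻ t in tailTimes M x α t₀, ENNReal.ofReal (g (infDist (traj x α t) M)) :=
        setLIntegral_lt_setLIntegral_comp (lipschitzWith_infDist_traj hα)
          (Ioo_subset_image_tailTimes hMcl hl0 hH hα h0 ht₀ hfin)
          (by simpa using ofReal_infDist_lt_volume_tailTimes hα ht₀ hT)
          (ENNReal.measurable_ofReal.comp
            (Measurable.ite measurableSet_Iio hγtc.measurable measurable_const))
          hg_pos (hG ▸ ENNReal.ofReal_ne_top)
    _ ≤ tailCost M l x α t₀ := setLIntegral_mono' measurableSet_tailTimes fun t ht =>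
        ENNReal.ofReal_le_ofReal (hg_le t ht)

end Comparison

section Optimality

variable {n : ℕ} {M : Set (Euc n)} {l : Euc n → ℝ} {x : Euc n} {α : ℝ → Euc n}
  {γ γt : ℝ → ℝ} {r t₀ : ℝ}

lemma le_tailCost (hMne : M.Nonempty) (hMcl : IsClosed M) (hl0 : ∀ z, 0 ≤ l z)
    (hH : ∀ δ : ℝ, 0 < δ → 0 < γ δ ∧ γ δ < sInf (l '' {y : Euc n | δ < infDist y M}))
    (hγtc : Continuous γt) (hγtpos : ∀ s : ℝ, 0 < s → 0 < γt s)
    (hL : ∀ z : Euc n, infDist z M ≤ r → l z = γt (infDist z M))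
    (hα : Admissible α) (h0 : 0 ≤ t₀) (ht₀ : ENNReal.ofReal t₀ < hitTime M x α)
    (hr : infDist (traj x α t₀) M ≤ r) :
    ENNReal.ofReal (∫ s in (0 : ℝ)..infDist (traj x α t₀) M, γt s) ≤ tailCost M l x α t₀ := by
  by_cases hT : hitTime M x α = ENNReal.ofReal (t₀ + infDist (traj x α t₀) M)
  · exact (tailCost_eq_of_hitTime_eq hMcl hγtc hγtpos hL hα h0 hr hT).ge
  · exact (lt_tailCost_of_hitTime_ne hMne hMcl hl0 hH hγtc hγtpos hL hα h0 ht₀ hr hT).le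

lemma valE_ne_top (hMne : M.Nonempty) (hMcl : IsClosed M) (hlc : Continuous l) :
    valE M l x ≠ ⊤ := by
  obtain ⟨β, hβ, hT⟩ : ∃ β, Admissible β ∧ hitTime M x β ≠ ⊤ := by
    by_cases hx : x ∈ M
    · exact ⟨0, admissible_zero, by simp [hitTime_eq_zero_of_mem hx]⟩
    · obtain ⟨β, hβ, -, hT⟩ := exists_reroute hMne hMcl admissible_zero le_rfl
        (by simpa using hitTime_pos hMcl admissible_zero hx)
      exact ⟨β, hβ, hT ▸ ENNReal.ofReal_ne_top⟩
  exact ((iInf₂_le β hβ).trans_lt (tailCost_lt_top hlc hβ hT)).ne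

-- Otherwise rerouting the control at `t₀` straight to the target makes it strictly cheaper.
lemma hitTime_eq_of_isOptimal (hMne : M.Nonempty) (hMcl : IsClosed M) (hlc : Continuous l)
    (hl0 : ∀ z, 0 ≤ l z)
    (hH : ∀ δ : ℝ, 0 < δ → 0 < γ δ ∧ γ δ < sInf (l '' {y : Euc n | δ < infDist y M}))
    (hγtc : Continuous γt) (hγtpos : ∀ s : ℝ, 0 < s → 0 < γt s)
    (hL : ∀ z : Euc n, infDist z M ≤ r → l z = γt (infDist z M))
    (hα : IsOptimal M l x α) (h0 : 0 ≤ t₀) (ht₀ : ENNReal.ofReal t₀ < hitTime M x α)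
    (hr : infDist (traj x α t₀) M ≤ r) :
    hitTime M x α = ENNReal.ofReal (t₀ + infDist (traj x α t₀) M) := by
  by_contra hT
  obtain ⟨β, hβ, hleft, hTβ⟩ := exists_reroute hMne hMcl hα.1 h0 ht₀
  have hβt₀ : ENNReal.ofReal t₀ < hitTime M x β := by
    rw [hTβ, ENNReal.ofReal_lt_ofReal_iff']
    have := infDist_traj_pos_of_lt_hitTime hMne hMcl h0 ht₀
    constructor <;> linarith
  have hcostβ : cost M l x β = (∫⁻ t in Ioc 0 t₀, ENNReal.ofReal (l (traj x α t))) +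
      ENNReal.ofReal (∫ s in (0 : ℝ)..infDist (traj x α t₀) M, γt s) := by
    rw [← hleft t₀ le_rfl] at hr hTβ ⊢
    rw [cost_eq_tailCost, tailCost_eq_add h0 hβt₀,
      tailCost_eq_of_hitTime_eq hMcl hγtc hγtpos hL hβ h0 hr hTβ,
      setLIntegral_congr_fun measurableSet_Ioc fun t ht => by rw [hleft t ht.2]]
  have hcostα := tailCost_eq_add (l := l) h0 ht₀
  rw [← cost_eq_tailCost] at hcostα
  have hhead : ∫⁻ t in Ioc 0 t₀, ENNReal.ofReal (l (traj x α t)) ≠ ⊤ :=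
    ne_top_of_le_ne_top (hα.2 ▸ valE_ne_top hMne hMcl hlc) (hcostα ▸ le_self_add)
  have hlt : cost M l x β < cost M l x α := by
    rw [hcostβ, hcostα]
    exact ENNReal.add_lt_add_left hhead
      (lt_tailCost_of_hitTime_ne hMne hMcl hl0 hH hγtc hγtpos hL hα.1 h0 ht₀ hr hT)
  exact hlt.not_ge (hα.2 ▸ iInf₂_le β hβ)

theorem valE_eq_and_hitTime_eq_of_infDist_le (hMne : M.Nonempty) (hMcl : IsClosed M)
    (hlc : Continuous l) (hl0 : ∀ z, 0 ≤ l z)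
    (hH : ∀ δ : ℝ, 0 < δ → 0 < γ δ ∧ γ δ < sInf (l '' {y : Euc n | δ < infDist y M}))
    (hγtc : Continuous γt) (hγtpos : ∀ s : ℝ, 0 < s → 0 < γt s)
    (hL : ∀ z : Euc n, infDist z M ≤ r → l z = γt (infDist z M)) (hx : infDist x M ≤ r) :
    valE M l x = ENNReal.ofReal (∫ s in (0 : ℝ)..infDist x M, γt s) ∧
      ∀ α, IsOptimal M l x α → hitTime M x α = ENNReal.ofReal (infDist x M) := by
  by_cases hxM : x ∈ M
  · have hcost : cost M l x 0 = 0 := by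
      simp [cost_eq_tailCost, tailCost, tailTimes, hitTime_eq_zero_of_mem hxM]
    rw [infDist_zero_of_mem hxM, intervalIntegral.integral_same, ENNReal.ofReal_zero]
    exact ⟨le_zero_iff.1 (hcost ▸ iInf₂_le 0 admissible_zero),
      fun α _ => hitTime_eq_zero_of_mem hxM⟩
  have hpos : ∀ α, Admissible α → ENNReal.ofReal 0 < hitTime M x α := fun α hα => by
    simpa using hitTime_pos hMcl hα hxM
  obtain ⟨β, hβ, -, hTβ⟩ := exists_reroute hMne hMcl admissible_zero le_rfl (hpos 0 admissible_zero)
  have hcostβ := tailCost_eq_of_hitTime_eq (l := l) hMcl hγtc hγtpos hL hβ le_rfl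
    (by simpa using hx) (by simpa using hTβ)
  simp only [traj_zero] at hcostβ
  refine ⟨le_antisymm (hcostβ ▸ iInf₂_le β hβ) (le_iInf₂ fun α hα => ?_), fun α hα => ?_⟩
  · simpa [cost_eq_tailCost] using le_tailCost hMne hMcl hl0 hH hγtc hγtpos hL hα le_rfl (hpos α hα)
      (by simpa using hx)
  · simpa using hitTime_eq_of_isOptimal hMne hMcl hlc hl0 hH hγtc hγtpos hL hα le_rfl
      (hpos α hα.1) (by simpa using hx)

theorem hitTime_ne_top_of_isOptimal (hMne : M.Nonempty) (hMcl : IsClosed M)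
    (hlc : Continuous l) (hl0 : ∀ z, 0 ≤ l z)
    (hH : ∀ δ : ℝ, 0 < δ → 0 < γ δ ∧ γ δ < sInf (l '' {y : Euc n | δ < infDist y M}))
    (hr : 0 < r) (hγtc : Continuous γt) (hγtpos : ∀ s : ℝ, 0 < s → 0 < γt s)
    (hL : ∀ z : Euc n, infDist z M ≤ r → l z = γt (infDist z M))
    {α : ℝ → Euc n} (hα : IsOptimal M l x α) : hitTime M x α ≠ ⊤ := by
  intro hT
  have hlt : ∀ t, ENNReal.ofReal t < hitTime M x α := fun t => hT ▸ ENNReal.ofReal_lt_top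
  have hfin : tailCost M l x α 0 ≠ ⊤ := by
    rw [← cost_eq_tailCost, hα.2]
    exact valE_ne_top hMne hMcl hlc
  obtain ⟨t₀, ht₀, hr₀⟩ := exists_mem_tailTimes_infDist_lt hMcl hl0 hH hα.1 le_rfl (hlt 0) hfin hr
  exact ENNReal.ofReal_ne_top (hT ▸ hitTime_eq_of_isOptimal hMne hMcl hlc hl0 hH hγtc hγtpos hL hα
    ht₀.1.le (hlt t₀) hr₀.le).symm

end Optimality

theorem stmt18_general {n : ℕ} (M : Set (Euc n)) (l : Euc n → ℝ)
    (hMne : M.Nonempty) (hMcl : IsClosed M)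
    (hlc : Continuous l)
    (hlpos : ∀ z ∉ M, 0 < l z) (hlzero : ∀ z ∈ M, l z = 0)
    (γ : ℝ → ℝ)
    (hH : ∀ δ : ℝ, 0 < δ → 0 < γ δ ∧
      γ δ < sInf (l '' {y : Euc n | δ < Metric.infDist y M}))
    (γt : ℝ → ℝ) (r : ℝ) (hr : 0 < r)
    (hγtc : Continuous γt) (hγtpos : ∀ s : ℝ, 0 < s → 0 < γt s)
    (hL : ∀ x : Euc n, Metric.infDist x M ≤ r → l x = γt (Metric.infDist x M)) :
    (∀ x : Euc n, Metric.infDist x M ≤ r →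
      valE M l x = ENNReal.ofReal (∫ s in (0:ℝ)..(Metric.infDist x M), γt s) ∧
      ∀ α : ℝ → Euc n, IsOptimal M l x α →
        hitTime M x α = ENNReal.ofReal (Metric.infDist x M)) ∧
    (∀ x : Euc n, ∀ α : ℝ → Euc n, IsOptimal M l x α → hitTime M x α ≠ ⊤) := by
  have hl0 : ∀ z, 0 ≤ l z := fun z => by
    by_cases hz : z ∈ M
    · exact (hlzero z hz).ge
    · exact (hlpos z hz).le
  exact ⟨fun x hx => valE_eq_and_hitTime_eq_of_infDist_le hMne hMcl hlc hl0 hH hγtc hγtpos hL hx,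
    fun x α hα => hitTime_ne_top_of_isOptimal hMne hMcl hlc hl0 hH hr hγtc hγtpos hL hα⟩

/-- under assumptions (F), (H) and (L) (near the target, `ℓ` is a positive
continuous function `γ̃` of the distance `d(x) = dist(x,M)`): (i) for `d(x) ≤ r`,
`v(x) = ∫₀^{d(x)} γ̃(s) ds` and every optimal control has hitting time exactly `d(x)`;
(ii) for every `x`, every optimal control has finite hitting time. -/
theorem stmt18 {n : ℕ} (M : Set (Euc n)) (l : Euc n → ℝ)
    (hMne : M.Nonempty) (hMcl : IsClosed M)
    (hlc : Continuous l) (hlbd : BddAbove (Set.range l))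
    (hlpos : ∀ z ∉ M, 0 < l z) (hlzero : ∀ z ∈ M, l z = 0)
    (γ : ℝ → ℝ)
    (hH : ∀ δ : ℝ, 0 < δ → 0 < γ δ ∧
      γ δ < sInf (l '' {y : Euc n | δ < Metric.infDist y M}))
    (γt : ℝ → ℝ) (r : ℝ) (hr : 0 < r)
    (hγtc : Continuous γt) (hγt0 : γt 0 = 0) (hγtpos : ∀ s : ℝ, 0 < s → 0 < γt s)
    (hL : ∀ x : Euc n, Metric.infDist x M ≤ r → l x = γt (Metric.infDist x M)) :
    (∀ x : Euc n, Metric.infDist x M ≤ r →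
      valE M l x = ENNReal.ofReal (∫ s in (0:ℝ)..(Metric.infDist x M), γt s) ∧
      ∀ α : ℝ → Euc n, IsOptimal M l x α →
        hitTime M x α = ENNReal.ofReal (Metric.infDist x M)) ∧
    (∀ x : Euc n, ∀ α : ℝ → Euc n, IsOptimal M l x α → hitTime M x α ≠ ⊤) :=
  stmt18_general M l hMne hMcl hlc hlpos hlzero γ hH γt r hr hγtc hγtpos hL
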